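/- Let (a_n) be defined by a_0 = 4 and, for n ≥ 1, a_n = min{ |d − p_n/d| : d divides p_n and |d − p_n/d| > 1 }, where p_n = a_0·a_1···a_{n−1}, and let (b_n) be defined by b_1 = 1 and b_n = ⌈(1/2)·(b_1 + ... + b_{n−1})⌉ for n ≥ 2. Then for every n ≥ 3, the partial product satisfies p_n = 3·2^{k_n} with k_n = 2 + ∑_{j=1}^{n−1} b_j; in particular p_3 = 48 = 3·2^4. -/

import Mathlib

/-!
Once `p n = 3 * 2 ^ k` with `k ≥ 3`, the divisors of `p n` are `2 ^ i` and `3 * 2 ^ i`, and the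
closest factor pair `3 * 2 ^ e`, `2 ^ (k - e)` with `e = (k - 1) / 2` has gap exactly `2 ^ e`,
while every factor pair has gap at least `2 ^ e`. Hence `a n = 2 ^ ((k - 1) / 2)` and `p (n + 1)`
is again of the form `3 * 2 ^ k'`. Writing `k = 2 + S` with `S = b 1 + ⋯ + b (n - 1)`, the new
exponent `(k - 1) / 2 = ⌈S / 2⌉` is exactly `b n`. The first values `a 0, a 1, a 2 = 4, 3, 4` are
computed by hand.
-/

open Finset

def divisorGaps (N : ℕ) : Set ℕ :=
  {v : ℕ | ∃ d : ℕ, d ∣ N ∧ 0 < d ∧ 1 < v ∧ (v : ℤ) = |(d : ℤ) - ((N / d : ℕ) : ℤ)|}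

lemma exists_eq_pow_or_eq_mul_pow_of_dvd_mul_pow {p q d k : ℕ} (hp : p.Prime) (hq : q.Prime)
    (h : d ∣ q * p ^ k) : ∃ i ≤ k, d = p ^ i ∨ d = q * p ^ i := by
  obtain ⟨d₁, d₂, hd₁, hd₂, rfl⟩ := exists_dvd_and_dvd_of_dvd_mul h
  obtain ⟨i, hi, rfl⟩ := (Nat.dvd_prime_pow hp).mp hd₂
  rcases hq.eq_one_or_self_of_dvd d₁ hd₁ with rfl | rfl
  · exact ⟨i, hi, Or.inl (one_mul _)⟩
  · exact ⟨i, hi, Or.inr rfl⟩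

lemma two_pow_le_abs_two_pow_sub_three_mul_two_pow (i j : ℕ) :
    (2 : ℤ) ^ ((i + j - 1) / 2) ≤ |2 ^ i - 3 * 2 ^ j| := by
  have hmono {s t : ℕ} (h : s ≤ t) : (2 : ℤ) ^ s ≤ 2 ^ t := pow_le_pow_right₀ one_le_two h
  rcases le_or_gt i j with hij | hji
  · calc (2 : ℤ) ^ ((i + j - 1) / 2)
        ≤ 2 ^ j := hmono (by omega)
      _ ≤ 3 * 2 ^ j - 2 ^ i := by linarith [hmono hij, pow_pos (two_pos (α := ℤ)) j]
      _ ≤ |2 ^ i - 3 * 2 ^ j| := by rw [abs_sub_comm]; exact le_abs_self _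
  · obtain ⟨t, rfl⟩ := Nat.exists_eq_add_of_lt hji
    rcases t with _ | t
    · rw [show j + 0 + 1 + j - 1 = 2 * j by omega, Nat.mul_div_cancel_left _ two_pos,
        show (2 : ℤ) ^ (j + 0 + 1) - 3 * 2 ^ j = -2 ^ j by ring, abs_neg,
        abs_of_pos (by positivity)]
    · calc (2 : ℤ) ^ ((j + (t + 1) + 1 + j - 1) / 2)
          ≤ 2 ^ j * 2 ^ t := by rw [← pow_add]; exact hmono (by omega)
        _ ≤ 2 ^ j * (4 * 2 ^ t - 3) := by
          gcongr; linarith [one_le_pow₀ (M₀ := ℤ) one_le_two (n := t)]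
        _ = 2 ^ (j + (t + 1) + 1) - 3 * 2 ^ j := by ring
        _ ≤ |2 ^ (j + (t + 1) + 1) - 3 * 2 ^ j| := le_abs_self _

lemma two_pow_le_abs_sub_of_mul_eq_three_mul_two_pow {x y k : ℕ} (h : x * y = 3 * 2 ^ k) :
    (2 : ℤ) ^ ((k - 1) / 2) ≤ |(x : ℤ) - y| := by
  obtain ⟨i, hi, rfl | rfl⟩ :=
    exists_eq_pow_or_eq_mul_pow_of_dvd_mul_pow Nat.prime_two Nat.prime_three (Dvd.intro y h)
  · have hy : y = 3 * 2 ^ (k - i) := by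
      refine Nat.eq_of_mul_eq_mul_left (pow_pos two_pos i) ?_
      rw [h, mul_left_comm, ← pow_add, Nat.add_sub_cancel' hi]
    have := two_pow_le_abs_two_pow_sub_three_mul_two_pow i (k - i)
    rw [Nat.add_sub_cancel' hi] at this
    simpa [hy] using this
  · have hy : y = 2 ^ (k - i) := by
      refine Nat.eq_of_mul_eq_mul_left (by positivity : 0 < 3 * 2 ^ i) ?_
      rw [h, mul_assoc, ← pow_add, Nat.add_sub_cancel' hi]
    have := two_pow_le_abs_two_pow_sub_three_mul_two_pow (k - i) i
    rw [Nat.sub_add_cancel hi, abs_sub_comm] at this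
    simpa [hy] using this

lemma sInf_divisorGaps_three_mul_two_pow {k : ℕ} (hk : 3 ≤ k) :
    sInf (divisorGaps (3 * 2 ^ k)) = 2 ^ ((k - 1) / 2) := by
  set e := (k - 1) / 2
  have hdvd : 3 * 2 ^ e ∣ 3 * 2 ^ k := mul_dvd_mul_left 3 (pow_dvd_pow 2 (by omega))
  refine IsLeast.csInf_eq
    ⟨⟨3 * 2 ^ e, hdvd, by positivity, Nat.one_lt_two_pow (by omega), ?_⟩, ?_⟩
  · have hcof : 3 * 2 ^ k / (3 * 2 ^ e) = 2 ^ (k - e) := by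
      rw [Nat.div_eq_iff_eq_mul_left (by positivity) hdvd, mul_left_comm, ← pow_add,
        Nat.sub_add_cancel (by omega)]
    rw [hcof]
    push_cast
    rcases (by omega : k - e = e + 1 ∨ k - e = e + 2) with h | h <;> rw [h, pow_add]
    · rw [show (3 : ℤ) * 2 ^ e - 2 ^ e * 2 ^ 1 = 2 ^ e by ring, abs_of_pos (by positivity)]
    · rw [show (3 : ℤ) * 2 ^ e - 2 ^ e * 2 ^ 2 = -2 ^ e by ring, abs_neg, abs_of_pos (by positivity)]
  · rintro v ⟨d, hd, -, -, hv⟩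
    have := two_pow_le_abs_sub_of_mul_eq_three_mul_two_pow (Nat.mul_div_cancel' hd)
    exact_mod_cast hv ▸ this

lemma sInf_divisorGaps_four : sInf (divisorGaps 4) = 3 := by
  refine IsLeast.csInf_eq ⟨⟨1, one_dvd _, one_pos, by norm_num, by norm_num⟩, ?_⟩
  rintro v ⟨d, hd, hd₀, hv, hveq⟩
  have : d ≤ 4 := Nat.le_of_dvd (by norm_num) hd
  interval_cases d <;> (try norm_num at hd hveq) <;> omega

lemma sInf_divisorGaps_twelve : sInf (divisorGaps 12) = 4 := by
  refine IsLeast.csInf_eq ⟨⟨2, by norm_num, two_pos, by norm_num, by norm_num⟩, ?_⟩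
  rintro v ⟨d, hd, hd₀, hv, hveq⟩
  have : d ≤ 12 := Nat.le_of_dvd (by norm_num) hd
  interval_cases d <;> (try norm_num at hd hveq) <;> omega

lemma ceil_natCast_div_two (n : ℕ) : ⌈(n : ℚ) / 2⌉ = ((n + 1) / 2 : ℕ) := by
  have := Rat.ceil_natCast_div_natCast n 2
  push_cast at this
  rw [this]
  omega

/-- With `a 0 = 4`, `p n = a 0 ⋯ a (n-1)`,
`a n = min{ |d − p n / d| : d ∣ p n, |d − p n / d| > 1 }` for `n ≥ 1`,
`b 1 = 1` and `b n = ⌈(b 1 + ⋯ + b (n-1)) / 2⌉` for `n ≥ 2`,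
the partial products satisfy `p n = 3 * 2 ^ (2 + ∑_{j=1}^{n-1} b j)` for all
`n ≥ 3`; in particular `p 3 = 48 = 3 * 2 ^ 4`. -/
theorem partial_products_eq_three_mul_two_pow
    (a b p : ℕ → ℕ)
    (hp : ∀ n, p n = ∏ k ∈ Finset.range n, a k)
    (ha0 : a 0 = 4)
    (ha : ∀ n, 1 ≤ n →
      a n = sInf {v : ℕ | ∃ d : ℕ, d ∣ p n ∧ 0 < d ∧ 1 < v ∧
        (v : ℤ) = |(d : ℤ) - ((p n / d : ℕ) : ℤ)|})
    (hb1 : b 1 = 1)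
    (hb : ∀ n, 2 ≤ n →
      (b n : ℤ) = ⌈(∑ k ∈ Finset.Icc 1 (n - 1), (b k : ℚ)) / 2⌉) :
    (∀ n, 3 ≤ n → p n = 3 * 2 ^ (2 + ∑ j ∈ Finset.Icc 1 (n - 1), b j)) ∧
      p 3 = 48 ∧ (48 : ℕ) = 3 * 2 ^ 4 := by
  have ha' (n : ℕ) (hn : 1 ≤ n) : a n = sInf (divisorGaps (p n)) := ha n hn
  have hb' (n : ℕ) (hn : 2 ≤ n) : b n = (∑ k ∈ Icc 1 (n - 1), b k + 1) / 2 := by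
    have := hb n hn
    rw [← Nat.cast_sum, ceil_natCast_div_two] at this
    exact_mod_cast this
  have hp_succ (n : ℕ) : p (n + 1) = p n * a n := by rw [hp, prod_range_succ, ← hp]
  have hp1 : p 1 = 4 := by rw [hp, prod_range_one, ha0]
  have hp2 : p 2 = 12 := by rw [hp_succ, ha' 1 le_rfl, hp1, sInf_divisorGaps_four]
  have hp3 : p 3 = 48 := by rw [hp_succ, ha' 2 (by norm_num), hp2, sInf_divisorGaps_twelve]
  refine ⟨fun n hn => ?_, hp3, rfl⟩
  induction n, hn using Nat.le_induction with
  | base => simp [hp3, sum_Icc_succ_top, hb1, hb' 2 le_rfl]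
  | succ n hn ih =>
    have hsum_pos : 1 ≤ ∑ j ∈ Icc 1 (n - 1), b j := calc
      1 = b 1 := hb1.symm
      _ ≤ _ := single_le_sum (fun _ _ => Nat.zero_le _) (mem_Icc.mpr ⟨le_rfl, by omega⟩)
    rw [hp_succ, ha' n (by omega), ih, sInf_divisorGaps_three_mul_two_pow (by omega),
      mul_assoc, ← pow_add, Nat.add_sub_cancel, ← Nat.sub_add_cancel (by omega : 1 ≤ n),
      sum_Icc_succ_top (by omega), hb' (n - 1 + 1) (by omega), Nat.add_sub_cancel]
    congr 2
    omega
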